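/- arXiv:2210.17169 — 2 statements merged into one kernel-verified Lean document; each statement's English description precedes it below -/
import Mathlib

section
/- Let X* = P D Pᵀ and Z* = P Λ Pᵀ with P orthogonal, D = diag(D_α, O, O) where D_α ≻ O is |α|×|α|, and Λ = diag(O, O, Λ_γ) where Λ_γ ≻ O is |γ|×|γ| (so X* Z* = O). Let A₁,…,Aₙ ∈ 𝕊^d and define the matrix ℋ ∈ 𝕊ⁿ by ℋ_{ij} = 2⟨Z*, Aᵢ (X*)† Aⱼ⟩ where (X*)† is the Moore–Penrose inverse. Then for every x̂ ∈ ℝⁿ, setting B := Σⱼ x̂ⱼ Aⱼ, one has ⟨ℋ x̂, x̂⟩ = 2 tr(Λ_γ P_γᵀ B P_α D_α⁻¹ P_αᵀ B P_γ) ≥ 0. -/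
open Matrix Finset

/-- The sigma-term quadratic form: with `X* = P D Pᵀ`, `Z* = P Λ Pᵀ` (orthogonal `P`,
`D`, `Λ` nonnegative diagonal with complementary supports), `(X*)† = P D† Pᵀ`, and
`ℋᵢⱼ = 2⟨Z*, Aᵢ (X*)† Aⱼ⟩`, for every `x̂` and `B := Σⱼ x̂ⱼ Aⱼ` one has
`⟨ℋ x̂, x̂⟩ = 2 tr(Λ_γ P_γᵀ B P_α D_α⁻¹ P_αᵀ B P_γ)
          = 2 Σ_{i∈γ} Σ_{j∈α} Λᵢ Dⱼ⁻¹ [Pᵀ B P]_{ij}² ≥ 0`.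
(Here `(0 : ℝ)⁻¹ = 0`, so `diagonal (lamD ·)⁻¹` is the Moore–Penrose inverse of `D`.) -/
theorem sigma_term_quadratic_form {d n : ℕ}
    (lamD lamL : Fin d → ℝ) (P : Matrix (Fin d) (Fin d) ℝ)
    (hP : Pᵀ * P = 1)
    (hD : ∀ i, 0 ≤ lamD i) (hL : ∀ i, 0 ≤ lamL i)
    (hDL : ∀ i, lamD i * lamL i = 0)
    (Xstar Zstar Xdag : Matrix (Fin d) (Fin d) ℝ)
    (hX : Xstar = P * Matrix.diagonal lamD * Pᵀ)
    (hZ : Zstar = P * Matrix.diagonal lamL * Pᵀ)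
    (hXdag : Xdag = P * Matrix.diagonal (fun i => (lamD i)⁻¹) * Pᵀ)
    (A : Fin n → Matrix (Fin d) (Fin d) ℝ) (hA : ∀ j, (A j).IsSymm)
    (H : Matrix (Fin n) (Fin n) ℝ)
    (hH : ∀ i j, H i j = 2 * (Zstar * (A i * Xdag * A j)).trace)
    (xhat : Fin n → ℝ) (B : Matrix (Fin d) (Fin d) ℝ)
    (hB : B = ∑ j, xhat j • A j) :
    xhat ⬝ᵥ H.mulVec xhat =
        2 * ∑ i ∈ univ.filter (fun i => 0 < lamL i),
              ∑ j ∈ univ.filter (fun j => 0 < lamD j),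
                lamL i * (lamD j)⁻¹ * ((Pᵀ * B * P) i j) ^ 2 ∧
      0 ≤ xhat ⬝ᵥ H.mulVec xhat := by
  have hPP : P * Pᵀ = 1 := mul_eq_one_comm.mp hP
  set M : Matrix (Fin d) (Fin d) ℝ := Pᵀ * B * P with hM
  -- B is symmetric
  have hBsymm : Bᵀ = B := by
    rw [hB, Matrix.transpose_sum]
    exact Finset.sum_congr rfl fun j _ => by rw [Matrix.transpose_smul, (hA j)]
  have hMsymm : ∀ i j, M j i = M i j := by
    intro i j
    have : Mᵀ = M := by
      rw [hM, Matrix.transpose_mul, Matrix.transpose_mul, Matrix.transpose_transpose, hBsymm,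
        Matrix.mul_assoc]
    calc M j i = Mᵀ i j := rfl
      _ = M i j := by rw [this]
  -- step 1: quadratic form equals 2 * trace(Zstar * (B * Xdag * B))
  have step1 : xhat ⬝ᵥ H.mulVec xhat = 2 * (Zstar * (B * Xdag * B)).trace := by
    have hexp : Zstar * (B * Xdag * B)
        = ∑ i, ∑ j, (xhat i * xhat j) • (Zstar * (A i * Xdag * A j)) := by
      rw [hB]
      simp only [Matrix.sum_mul, Matrix.mul_sum, Matrix.smul_mul, Matrix.mul_smul,
        Finset.smul_sum, smul_smul, Matrix.mul_assoc]
      rw [Finset.sum_comm]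
      exact Finset.sum_congr rfl fun i _ => Finset.sum_congr rfl fun j _ => by
        rw [mul_comm]
    rw [hexp]
    simp only [Matrix.trace_sum, Matrix.trace_smul, smul_eq_mul, dotProduct, Matrix.mulVec,
      dotProduct, hH, Finset.mul_sum, Finset.sum_mul]
    refine Finset.sum_congr rfl fun i _ => Finset.sum_congr rfl fun j _ => by ring
  -- step 2: trace equals double sum over all indices
  have step2 : (Zstar * (B * Xdag * B)).trace
      = ∑ i, ∑ j, lamL i * (lamD j)⁻¹ * (M i j)^2 := by
    have hmat : Zstar * (B * Xdag * B)
        = P * (Matrix.diagonal lamL * M * Matrix.diagonal (fun j => (lamD j)⁻¹) * M) * Pᵀ := by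
      rw [hZ, hXdag, hM]
      simp only [Matrix.mul_assoc, hPP, Matrix.mul_one]
    have hentry : ∀ k x, (Matrix.diagonal lamL * M * Matrix.diagonal (fun j => (lamD j)⁻¹)) k x
        = lamL k * M k x * (lamD x)⁻¹ := fun k x => by
      rw [Matrix.mul_diagonal, Matrix.diagonal_mul]
    rw [hmat, Matrix.trace_mul_cycle, ← Matrix.mul_assoc, hP, Matrix.one_mul]
    simp only [Matrix.trace, Matrix.diag, Matrix.mul_apply, hentry]
    refine Finset.sum_congr rfl fun i _ => Finset.sum_congr rfl fun j _ => ?_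
    rw [hMsymm i j]; ring
  -- step 3: restrict to supports
  have step3 : (∑ i, ∑ j, lamL i * (lamD j)⁻¹ * (M i j)^2)
      = ∑ i ∈ univ.filter (fun i => 0 < lamL i),
          ∑ j ∈ univ.filter (fun j => 0 < lamD j),
            lamL i * (lamD j)⁻¹ * (M i j)^2 := by
    rw [Finset.sum_filter, Finset.sum_congr rfl]
    intro i _
    rw [Finset.sum_filter]
    by_cases hi : 0 < lamL i
    · simp only [hi, if_true]
      refine Finset.sum_congr rfl fun j _ => ?_
      by_cases hj : 0 < lamD j
      · simp [hj]
      · have : lamD j = 0 := le_antisymm (not_lt.mp hj) (hD j)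
        simp [hj, this]
    · have : lamL i = 0 := le_antisymm (not_lt.mp hi) (hL i)
      simp [hi, this]
  have main : xhat ⬝ᵥ H.mulVec xhat
      = 2 * ∑ i ∈ univ.filter (fun i => 0 < lamL i),
          ∑ j ∈ univ.filter (fun j => 0 < lamD j),
            lamL i * (lamD j)⁻¹ * ((Pᵀ * B * P) i j) ^ 2 := by
    rw [step1, step2, step3]
  refine ⟨main, ?_⟩
  rw [main]
  have : (0:ℝ) ≤ ∑ i ∈ univ.filter (fun i => 0 < lamL i),
      ∑ j ∈ univ.filter (fun j => 0 < lamD j),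
        lamL i * (lamD j)⁻¹ * ((Pᵀ * B * P) i j) ^ 2 := by
    refine Finset.sum_nonneg fun i hi => Finset.sum_nonneg fun j hj => ?_
    have h1 := hL i
    have h2 : 0 ≤ (lamD j)⁻¹ := inv_nonneg.mpr (hD j)
    positivity
  linarith
end

section
/- Let P : 𝕊^d → 𝕊^d be the projection onto the PSD cone and let v = (x, y, Z), with X : ℝⁿ → 𝕊^d, 𝒜(x) linear, σ ≥ 0, and symmetric matrices ξ-dependent quantities defined as follows: R := X(x+ξ) − X(x) − 𝒜(x)ξ, S := X(x) + 𝒜(x)ξ + σ(Σ − Z) − Σ, T := X(x) + 𝒜(x)ξ + R − Σ. Suppose the fixed-point condition X(x) + 𝒜(x)ξ + σ(Σ − Z) = P(S) holds. Then ‖X(x+ξ) − P(X(x+ξ) − Σ)‖_F ≤ 2‖R‖_F + 2σ‖Σ − Z‖_F. -/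
open Matrix

attribute [local instance] Matrix.frobeniusSeminormedAddCommGroup
  Matrix.frobeniusNormedAddCommGroup Matrix.frobeniusNormedSpace

namespace ResidualAux

variable {d : ℕ}

/-- entrywise inner product -/
noncomputable def inp (A B : Matrix (Fin d) (Fin d) ℝ) : ℝ :=
  ∑ i, ∑ j, A i j * B i j

lemma norm_sq_eq_inp (A : Matrix (Fin d) (Fin d) ℝ) : ‖A‖ ^ 2 = inp A A := by
  rw [Matrix.frobenius_norm_def]
  have h1 : ∀ i j, ‖A i j‖ ^ (2:ℝ) = A i j * A i j := by
    intro i j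
    rw [show (2:ℝ) = ((2:ℕ):ℝ) by norm_num, Real.rpow_natCast, Real.norm_eq_abs, sq_abs, sq]
  simp_rw [h1]
  have h0 : (0:ℝ) ≤ ∑ i, ∑ j, A i j * A i j :=
    Finset.sum_nonneg fun i _ => Finset.sum_nonneg fun j _ => mul_self_nonneg _
  rw [← Real.rpow_natCast ((∑ i, ∑ j, A i j * A i j) ^ (1/2:ℝ)) 2,
    ← Real.rpow_mul h0]
  norm_num
  rfl

lemma inp_expand (A B : Matrix (Fin d) (Fin d) ℝ) :
    inp (A - B) (A - B) = inp A A - 2 * inp A B + inp B B := by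
  have h : ∀ i j, (A i j - B i j) * (A i j - B i j)
      = A i j * A i j - 2 * (A i j * B i j) + B i j * B i j := fun i j => by ring
  simp only [inp, Matrix.sub_apply]
  simp_rw [h, Finset.sum_add_distrib, Finset.sum_sub_distrib, Finset.mul_sum]

lemma inp_smul_right (t : ℝ) (A B : Matrix (Fin d) (Fin d) ℝ) :
    inp A (t • B) = t * inp A B := by
  simp [inp, Matrix.smul_apply, Finset.mul_sum, mul_left_comm, mul_comm]

lemma inp_sub_left (A B C : Matrix (Fin d) (Fin d) ℝ) :
    inp (A - B) C = inp A C - inp B C := by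
  simp [inp, Matrix.sub_apply, sub_mul, Finset.sum_sub_distrib]

lemma inp_sub_right (A B C : Matrix (Fin d) (Fin d) ℝ) :
    inp A (B - C) = inp A B - inp A C := by
  simp [inp, Matrix.sub_apply, mul_sub, Finset.sum_sub_distrib]

lemma cone_convex (t : ℝ) (ht0 : 0 ≤ t) (ht1 : t ≤ 1)
    {M N : Matrix (Fin d) (Fin d) ℝ}
    (hM : M.IsSymm ∧ M.PosSemidef) (hN : N.IsSymm ∧ N.PosSemidef) :
    ((1 - t) • M + t • N).IsSymm ∧ ((1 - t) • M + t • N).PosSemidef := by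
  constructor
  · unfold Matrix.IsSymm
    rw [Matrix.transpose_add, Matrix.transpose_smul, Matrix.transpose_smul, hM.1, hN.1]
  · rw [Matrix.posSemidef_iff_dotProduct_mulVec]; constructor
    · unfold Matrix.IsHermitian
      rw [Matrix.conjTranspose_add, Matrix.conjTranspose_smul, Matrix.conjTranspose_smul,
        hM.2.1, hN.2.1]
      simp
    · intro v
      have := hM.2.dotProduct_mulVec_nonneg v
      have := hN.2.dotProduct_mulVec_nonneg v
      simp only [Matrix.add_mulVec, Matrix.smul_mulVec, dotProduct_add,
        dotProduct_smul, smul_eq_mul]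
      have h1 : (0:ℝ) ≤ 1 - t := by linarith
      exact add_nonneg (mul_nonneg h1 (hM.2.dotProduct_mulVec_nonneg v)) (mul_nonneg ht0 (hN.2.dotProduct_mulVec_nonneg v))

/-- variational inequality for the projection -/
lemma var_ineq (Scone : Set (Matrix (Fin d) (Fin d) ℝ))
    (hScone : Scone = {M : Matrix (Fin d) (Fin d) ℝ | M.IsSymm ∧ M.PosSemidef})
    (P : Matrix (Fin d) (Fin d) ℝ → Matrix (Fin d) (Fin d) ℝ)
    (hPmem : ∀ M, P M ∈ Scone)
    (hPmin : ∀ M, ∀ B ∈ Scone, ‖M - P M‖ ≤ ‖M - B‖)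
    (u B : Matrix (Fin d) (Fin d) ℝ) (hB : B ∈ Scone) :
    inp (u - P u) (B - P u) ≤ 0 := by
  set p := P u with hp
  have key : ∀ t : ℝ, 0 < t → t ≤ 1 → inp (u - p) (B - p) ≤ t / 2 * inp (B - p) (B - p) := by
    intro t ht0 ht1
    have hmem : (1 - t) • p + t • B ∈ Scone := by
      rw [hScone]
      have hpmem := hPmem u; rw [hScone] at hpmem
      have hBmem := hB; rw [hScone] at hBmem
      exact cone_convex t ht0.le ht1 hpmem hBmem
    have hle := hPmin u _ hmem
    have hrw : u - ((1 - t) • p + t • B) = (u - p) - t • (B - p) := by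
      module
    have hsq : inp (u - p) (u - p) ≤ inp ((u - p) - t • (B - p)) ((u - p) - t • (B - p)) := by
      rw [← norm_sq_eq_inp, ← norm_sq_eq_inp]
      rw [hrw] at hle
      exact pow_le_pow_left₀ (norm_nonneg _) hle 2
    rw [inp_expand (u - p) (t • (B - p)), inp_smul_right] at hsq
    have h2 : inp (t • (B - p)) (t • (B - p)) = t * (t * inp (B - p) (B - p)) := by
      rw [inp_smul_right]
      congr 1
      have : ∀ X Y : Matrix (Fin d) (Fin d) ℝ, inp X Y = inp Y X := by
        intro X Y; simp [inp, mul_comm]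
      rw [this, inp_smul_right, this]
    rw [h2] at hsq
    nlinarith [hsq]
  by_contra h
  push_neg at h
  set I := inp (u - p) (B - p) with hI
  set Q := inp (B - p) (B - p) with hQ
  have hQ0 : 0 ≤ Q := by rw [hQ, ← norm_sq_eq_inp]; positivity
  rcases eq_or_lt_of_le hQ0 with hQz | hQpos
  · have := key 1 one_pos le_rfl
    rw [← hQz] at this; simp at this; linarith
  · set t := min 1 (I / Q) with htdef
    have ht0 : 0 < t := lt_min one_pos (div_pos h hQpos)
    have ht1 : t ≤ 1 := min_le_left _ _
    have := key t ht0 ht1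
    have h2 : t / 2 * Q ≤ (I / Q) / 2 * Q := by
      have : t ≤ I / Q := min_le_right _ _
      nlinarith
    have h3 : (I / Q) / 2 * Q = I / 2 := by field_simp
    linarith

lemma nonexpansive (Scone : Set (Matrix (Fin d) (Fin d) ℝ))
    (hScone : Scone = {M : Matrix (Fin d) (Fin d) ℝ | M.IsSymm ∧ M.PosSemidef})
    (P : Matrix (Fin d) (Fin d) ℝ → Matrix (Fin d) (Fin d) ℝ)
    (hPmem : ∀ M, P M ∈ Scone)
    (hPmin : ∀ M, ∀ B ∈ Scone, ‖M - P M‖ ≤ ‖M - B‖)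
    (u v : Matrix (Fin d) (Fin d) ℝ) :
    ‖P u - P v‖ ≤ ‖u - v‖ := by
  have h1 := var_ineq Scone hScone P hPmem hPmin u (P v) (hPmem v)
  have h2 := var_ineq Scone hScone P hPmem hPmin v (P u) (hPmem u)
  set w := P u - P v with hw
  set δ := u - v with hδ
  -- inp (δ - w) w ≥ 0
  have key : inp w w ≤ inp δ w := by
    have e1 : inp (u - P u) (P v - P u) = - inp (u - P u) w := by
      rw [show P v - P u = (0 : Matrix (Fin d) (Fin d) ℝ) - w by rw [hw]; module,
        inp_sub_right]
      simp [inp]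
    have e2 : inp (v - P v) (P u - P v) = inp (v - P v) w := by rw [hw]
    rw [e1] at h1
    rw [e2] at h2
    have h3 : 0 ≤ inp (u - P u) w := by linarith
    have h4 : inp (δ - w) w = inp (u - P u) w - inp (v - P v) w := by
      rw [show δ - w = (u - P u) - (v - P v) by rw [hδ, hw]; module, inp_sub_left]
    have h5 : 0 ≤ inp (δ - w) w := by rw [h4]; linarith
    rw [inp_sub_left] at h5; linarith
  have hexp : ‖δ - w‖ ^ 2 = ‖δ‖ ^ 2 - 2 * inp δ w + ‖w‖ ^ 2 := by
    rw [norm_sq_eq_inp, norm_sq_eq_inp, norm_sq_eq_inp, inp_expand]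
  have hww : inp w w = ‖w‖ ^ 2 := (norm_sq_eq_inp w).symm
  have h6 : 0 ≤ ‖δ - w‖ ^ 2 := by positivity
  have h7 : ‖w‖ ^ 2 ≤ ‖δ‖ ^ 2 := by nlinarith
  calc ‖w‖ = Real.sqrt (‖w‖ ^ 2) := (Real.sqrt_sq (norm_nonneg _)).symm
    _ ≤ Real.sqrt (‖δ‖ ^ 2) := Real.sqrt_le_sqrt h7
    _ = ‖δ‖ := Real.sqrt_sq (norm_nonneg _)

end ResidualAux



/-- Residual estimate after one step: with `R = X(x+ξ) − X(x) − 𝒜(x)ξ`,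
`S = X(x) + 𝒜(x)ξ + σ(Σ − Z) − Σ`, and the fixed-point condition
`X(x) + 𝒜(x)ξ + σ(Σ − Z) = P(S)` (where `P` is the nonexpansive metric projection
onto the PSD cone), one has
`‖X(x+ξ) − P(X(x+ξ) − Σ)‖_F ≤ 2‖R‖_F + 2σ‖Σ − Z‖_F`. -/
theorem residual_estimate_after_step {n d : ℕ}
    (Xf : (Fin n → ℝ) → Matrix (Fin d) (Fin d) ℝ)
    (A : Fin n → Matrix (Fin d) (Fin d) ℝ)  -- Aⱼ(x), so 𝒜(x)ξ = Σⱼ ξⱼ Aⱼ(x)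
    (x ξ : Fin n → ℝ)
    (Sig Z : Matrix (Fin d) (Fin d) ℝ)
    (σ : ℝ) (hσ : 0 ≤ σ)
    -- the metric projection onto the PSD cone
    (Scone : Set (Matrix (Fin d) (Fin d) ℝ))
    (hScone : Scone = {M : Matrix (Fin d) (Fin d) ℝ | M.IsSymm ∧ M.PosSemidef})
    (P : Matrix (Fin d) (Fin d) ℝ → Matrix (Fin d) (Fin d) ℝ)
    (hPmem : ∀ M, P M ∈ Scone)
    (hPmin : ∀ M, ∀ B ∈ Scone, ‖M - P M‖ ≤ ‖M - B‖)
    (R S : Matrix (Fin d) (Fin d) ℝ)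
    (hR : R = Xf (x + ξ) - Xf x - ∑ j, ξ j • A j)
    (hSdef : S = Xf x + (∑ j, ξ j • A j) + σ • (Sig - Z) - Sig)
    (hfix : Xf x + (∑ j, ξ j • A j) + σ • (Sig - Z) = P S) :
    ‖Xf (x + ξ) - P (Xf (x + ξ) - Sig)‖ ≤ 2 * ‖R‖ + 2 * σ * ‖Sig - Z‖ := by
  have hNE := ResidualAux.nonexpansive Scone hScone P hPmem hPmin
  set T : Matrix (Fin d) (Fin d) ℝ := Xf (x + ξ) - Sig with hT
  have hX : Xf (x + ξ) = Xf x + (∑ j, ξ j • A j) + R := by rw [hR]; module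
  have hST : S - T = σ • (Sig - Z) - R := by rw [hSdef, hT, hX]; module
  have hkey : Xf (x + ξ) - P T = (P S - P T) + (R - σ • (Sig - Z)) := by
    rw [← hfix, hX]; module
  have hσn : ‖σ • (Sig - Z)‖ = σ * ‖Sig - Z‖ := by
    rw [norm_smul, Real.norm_of_nonneg hσ]
  calc ‖Xf (x + ξ) - P T‖
      = ‖(P S - P T) + (R - σ • (Sig - Z))‖ := by rw [hkey]
    _ ≤ ‖P S - P T‖ + ‖R - σ • (Sig - Z)‖ := norm_add_le _ _
    _ ≤ ‖S - T‖ + (‖R‖ + ‖σ • (Sig - Z)‖) :=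
        add_le_add (hNE S T) (norm_sub_le _ _)
    _ ≤ (‖σ • (Sig - Z)‖ + ‖R‖) + (‖R‖ + ‖σ • (Sig - Z)‖) := by
        have := norm_sub_le (σ • (Sig - Z)) R
        rw [hST]; linarith
    _ = 2 * ‖R‖ + 2 * σ * ‖Sig - Z‖ := by rw [hσn]; ring
end
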